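/- arXiv:1604.01288 — 2 statements merged into one kernel-verified Lean document; each statement's English description precedes it below -/
import Mathlib

section
/- Let F be a nonsingular unsatisfiable hitting clause-set with δ(F) = k, where k ≥ 2, and suppose F is strictly fs-resolvable. If N ∈ ℕ is such that every nonsingular unsatisfiable hitting clause-set G with δ(G) = k − 1 satisfies n(G) ≤ N, then n(F) ≤ N + 3. -/
/-- A clause-set: a finite set of finite sets of integers. -/
abbrev Cls := Finset (Finset ℤ)

/-- A clause: a finite set of nonzero integers, clash-free. -/
def IsClause (C : Finset ℤ) : Prop := (0 : ℤ) ∉ C ∧ ∀ x ∈ C, -x ∉ C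

/-- All members are clauses. -/
def IsClauseSet (F : Cls) : Prop := ∀ C ∈ F, IsClause C

/-- Satisfiability: some clause (partial assignment) meets every clause of `F`. -/
def Sat (F : Cls) : Prop := ∃ S : Finset ℤ, IsClause S ∧ ∀ D ∈ F, (S ∩ D).Nonempty

/-- Hitting: any two distinct clauses clash. -/
def Hitting (F : Cls) : Prop := ∀ C ∈ F, ∀ D ∈ F, C ≠ D → ∃ x ∈ C, -x ∈ D

/-- Unsatisfiable hitting clause-set. -/
def UHit (F : Cls) : Prop := IsClauseSet F ∧ Hitting F ∧ ¬ Sat F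

/-- The variables of a clause-set (as absolute values of its literals). -/
def cvar (F : Cls) : Finset ℤ := F.sup (fun C => C.image (fun x => |x|))

/-- Number of variables. -/
def nvar (F : Cls) : ℕ := (cvar F).card

/-- Deficiency: number of clauses minus number of variables. -/
def deficiency (F : Cls) : ℤ := (F.card : ℤ) - (nvar F : ℤ)

/-- Literal degree. -/
def ldeg (F : Cls) (x : ℤ) : ℕ := (F.filter (fun C => x ∈ C)).card

/-- Variable degree. -/
def vdeg (F : Cls) (v : ℤ) : ℕ := ldeg F v + ldeg F (-v)

/-- Singular variable. -/
def SingularVar (F : Cls) (v : ℤ) : Prop :=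
  v ∈ cvar F ∧ min (ldeg F v) (ldeg F (-v)) = 1

/-- Nonsingular clause-set. -/
def Nonsingular (F : Cls) : Prop := ∀ v, ¬ SingularVar F v

/-- Number of singular variables. -/
def nsv (F : Cls) : ℕ :=
  ((cvar F).filter (fun v => min (ldeg F v) (ldeg F (-v)) = 1)).card

/-- Number of 1-singular variables. -/
def nosv (F : Cls) : ℕ :=
  ((cvar F).filter (fun v => min (ldeg F v) (ldeg F (-v)) = 1 ∧ vdeg F v = 2)).card

/-- Number of singular, non-1-singular variables. -/
def nnosv (F : Cls) : ℕ :=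
  ((cvar F).filter (fun v => min (ldeg F v) (ldeg F (-v)) = 1 ∧ vdeg F v ≠ 2)).card

/-- Full subsumption pair: `{E ∪ {x}, E ∪ {-x}}`. -/
def IsFsPair (P : Cls) : Prop :=
  ∃ (E : Finset ℤ) (x : ℤ), IsClause E ∧ x ≠ 0 ∧ x ∉ E ∧ -x ∉ E ∧
    P = {insert x E, insert (-x) E}

/-- Strict fs-resolvability: an fs-pair whose resolvent is not in `F`, and whose
resolution variable occurs in the rest of `F`. -/
def StrictlyFsResolvable (F : Cls) : Prop :=
  ∃ (E : Finset ℤ) (x : ℤ), IsClause E ∧ x ≠ 0 ∧ x ∉ E ∧ -x ∉ E ∧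
    insert x E ∈ F ∧ insert (-x) E ∈ F ∧ E ∉ F ∧
    |x| ∈ cvar (F \ {insert x E, insert (-x) E})

/-- `F'` is an nfs-flip of `F`: an nfs-pair `{E ∪ {x}, E ∪ {-x,y}} ⊆ F` is replaced
by its flipped pair `{E ∪ {x,-y}, E ∪ {y}}`, which must not intersect `F`. -/
def NfsFlip (F F' : Cls) : Prop :=
  ∃ (E : Finset ℤ) (x y : ℤ), IsClause E ∧ x ≠ 0 ∧ y ≠ 0 ∧ |x| ≠ |y| ∧
    x ∉ E ∧ -x ∉ E ∧ y ∉ E ∧ -y ∉ E ∧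
    insert x E ∈ F ∧ insert y (insert (-x) E) ∈ F ∧
    insert (-y) (insert x E) ∉ F ∧ insert y E ∉ F ∧
    F' = (F \ {insert x E, insert y (insert (-x) E)}) ∪
         {insert (-y) (insert x E), insert y E}

/-- Intersection of all clauses of `F` (for nonempty `F`). -/
def bigInter (F : Cls) : Finset ℤ := (F.sup id).filter (fun x => ∀ C ∈ F, x ∈ C)

/-- Clause-factor: a nonempty `F' ⊆ F` whose residue is unsatisfiable. -/
def ClauseFactor (F F' : Cls) : Prop :=
  F'.Nonempty ∧ F' ⊆ F ∧ ¬ Sat (F'.image (fun E => E \ bigInter F'))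

/-- A clause-factor is trivial if it has one clause, or is unsatisfiable and all of `F`. -/
def TrivialFactor (F F' : Cls) : Prop := F'.card = 1 ∨ (¬ Sat F' ∧ F' = F)

/-- Clause-irreducible: every clause-factor is trivial. -/
def ClauseIrreducible (F : Cls) : Prop := ∀ F', ClauseFactor F F' → TrivialFactor F F'

/-- DP-reduction (variable elimination) on variable `v`. -/
def dp (v : ℤ) (F : Cls) : Cls :=
  ((F ×ˢ F).filter (fun p => p.1 ∩ p.2.image (fun x => -x) = {v})).image
    (fun p => (p.1 ∪ p.2) \ {v, -v}) ∪
  F.filter (fun C => v ∉ C ∧ -v ∉ C)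

/-- `x` (or `-x`) occurs in a clause of `F`. -/
def LitIn (F : Cls) (x : ℤ) : Prop := ∃ C ∈ F, x ∈ C ∨ -x ∈ C

/-- Isomorphism of clause-sets. -/
def Iso (F G : Cls) : Prop :=
  ∃ f : ℤ → ℤ, (∀ x, f (-x) = - f x) ∧
    (∀ x y, LitIn F x → LitIn F y → f x = f y → x = y) ∧
    G = F.image (fun C => C.image f)

/-- The clause-set D3. -/
def D3 : Cls := {({1,2,3} : Finset ℤ), {-1,-2,-3}, {-1,2}, {-2,3}, {-3,1}}

/-- Logical equivalence of clause-sets. -/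
def LogEquiv (F G : Cls) : Prop :=
  ∀ S : Finset ℤ, IsClause S →
    ((∀ D ∈ F, (S ∩ D).Nonempty) ↔ (∀ D ∈ G, (S ∩ D).Nonempty))

/-!
In a UHIT no literal is pure, so a variable is singular exactly when one of its literals occurs
once. Resolving the strict fs-pair `{E ∪ {x}, E ∪ {-x}}` to `E` keeps the UHIT property and all
variables (as `|x|` occurs elsewhere) and lowers the deficiency by one; afterwards a variable
other than `|x|` can only be singular through a once-occurring literal of `E` whose complement
occurs at least twice. A singular DP-reduction on one such literal, with `E` as its only
clause, replaces every clause containing the complement by a resolvent containing the rest of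
`E`, so all other such literals now occur at least twice and at most `|x|` is singular.
Eliminating `|x|` the same way leaves singular variables only through once-occurring literals
of a single resolvent, and one more such step makes the clause-set nonsingular. Singular
DP-reduction keeps the deficiency and removes one variable, whence `n(F) ≤ N + 3`.
-/

open Finset

section Basics

variable {F G : Cls} {C D S T : Finset ℤ} {z w : ℤ}

lemma mem_cvar : w ∈ cvar F ↔ ∃ C ∈ F, ∃ z ∈ C, |z| = w := by
  simp [cvar, Finset.mem_sup, Finset.mem_image]

lemma abs_mem_cvar (hC : C ∈ F) (hz : z ∈ C) : |z| ∈ cvar F :=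
  mem_cvar.2 ⟨C, hC, z, hz, rfl⟩

lemma cvar_mono (h : F ⊆ G) : cvar F ⊆ cvar G := Finset.sup_mono h

lemma IsClauseSet.pos_of_mem_cvar (hF : IsClauseSet F) (hw : w ∈ cvar F) : 0 < w := by
  obtain ⟨C, hC, z, hz, rfl⟩ := mem_cvar.1 hw
  exact abs_pos.2 fun h => (hF C hC).1 (h ▸ hz)

lemma ldeg_pos : 0 < ldeg F z ↔ ∃ C ∈ F, z ∈ C := by
  simp [ldeg, Finset.card_pos, Finset.filter_nonempty_iff]

lemma abs_mem_cvar_of_ldeg_pos (h : 0 < ldeg F z) : |z| ∈ cvar F := by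
  obtain ⟨C, hC, hz⟩ := ldeg_pos.1 h
  exact abs_mem_cvar hC hz

lemma eq_of_ldeg_eq_one (h : ldeg F z = 1) (hC : C ∈ F) (hzC : z ∈ C) (hD : D ∈ F)
    (hzD : z ∈ D) : C = D :=
  Finset.card_le_one.1 h.le C (mem_filter.2 ⟨hC, hzC⟩) D (mem_filter.2 ⟨hD, hzD⟩)

lemma IsClause.mono (hS : IsClause S) (hT : T ⊆ S) : IsClause T :=
  ⟨fun h => hS.1 (hT h), fun x hx hnx => hS.2 x (hT hx) (hT hnx)⟩

lemma IsClause.insert (hS : IsClause S) (hz : z ≠ 0) (hnz : -z ∉ S) :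
    IsClause (insert z S) := by
  refine ⟨by simpa [eq_comm] using ⟨hz, hS.1⟩, fun x hx hnx => ?_⟩
  rcases mem_insert.1 hx with rfl | hx <;> rcases mem_insert.1 hnx with h | hnx
  · exact hz (by omega)
  · exact hnz hnx
  · exact hnz (by rwa [← h, neg_neg])
  · exact hS.2 x hx hnx

lemma UHit.isClauseSet (hU : UHit F) : IsClauseSet F := hU.1

lemma UHit.hitting (hU : UHit F) : Hitting F := hU.2.1

lemma UHit.not_sat (hU : UHit F) : ¬ Sat F := hU.2.2

end Basics

/-- `S`, read as the set of true literals, makes every literal of `D` false. -/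
def Falsifies (S D : Finset ℤ) : Prop := ∀ z ∈ D, -z ∈ S

def Assigns (S : Finset ℤ) (F : Cls) : Prop := ∀ C ∈ F, ∀ z ∈ C, z ∈ S ∨ -z ∈ S

section Assignments

variable {F : Cls} {C D D₀ L S : Finset ℤ} {v z a : ℤ}

lemma IsClauseSet.exists_assigns_superset (hF : IsClauseSet F) (hL : IsClause L) :
    ∃ S, IsClause S ∧ L ⊆ S ∧ Assigns S F := by
  refine ⟨L ∪ (cvar F).filter (fun w => -w ∉ L), ⟨?_, ?_⟩, subset_union_left, ?_⟩
  · simp only [mem_union, mem_filter, not_or]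
    exact ⟨hL.1, fun h => (hF.pos_of_mem_cvar h.1).ne rfl⟩
  · intro x hx hnx
    simp only [mem_union, mem_filter, neg_neg] at hx hnx
    rcases hx with hx | ⟨hx, hxL⟩ <;> rcases hnx with hnx | ⟨hnx, hnxL⟩
    · exact hL.2 x hx hnx
    · exact hnxL hx
    · exact hxL hnx
    · linarith [hF.pos_of_mem_cvar hx, hF.pos_of_mem_cvar hnx]
  · intro C hC z hz
    have hw := abs_mem_cvar hC hz
    by_cases hzL : z ∈ L
    · simp [hzL]
    by_cases hnzL : -z ∈ L
    · simp [hnzL]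
    rcases abs_choice z with h | h <;> rw [h] at hw <;> simp_all

lemma exists_falsifies_of_not_sat (hF : ¬ Sat F) (hS : IsClause S) (ht : Assigns S F) :
    ∃ D ∈ F, Falsifies S D := by
  by_contra! h
  refine hF ⟨S, hS, fun D hD => ?_⟩
  obtain ⟨z, hz, hzS⟩ : ∃ z ∈ D, -z ∉ S := by simpa [Falsifies] using h D hD
  exact ⟨z, mem_inter.2 ⟨(ht D hD z hz).resolve_right hzS, hz⟩⟩

lemma Hitting.eq_of_falsifies (hH : Hitting F) (hS : IsClause S) (hD : D ∈ F) (hC : C ∈ F)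
    (hSD : Falsifies S D) (hSC : Falsifies S C) : D = C := by
  by_contra hne
  obtain ⟨z, hzD, hzC⟩ := hH D hD C hC hne
  exact hS.2 _ (hSD z hzD) (hSC _ hzC)

/-- Flipping `v` to `-v` in a total assignment falsifying `D₀ ∋ -v` must falsify some
clause; that clause is not `D₀`, so it contains `v`. -/
lemma UHit.exists_mem_of_flip (hU : UHit F) (hS : IsClause S) (ht : Assigns S F)
    (hv : v ∈ S) (hD₀ : D₀ ∈ F) (hSD₀ : Falsifies S D₀) (hvD₀ : -v ∈ D₀) :
    ∃ D ∈ F, v ∈ D ∧ ∀ z ∈ D, z ≠ v → -z ∈ S := by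
  have hv0 : v ≠ 0 := fun h => hS.1 (h ▸ hv)
  set S' := insert (-v) (S.erase v)
  have hS' : IsClause S' := (hS.mono (erase_subset _ _)).insert (neg_ne_zero.2 hv0) (by simp)
  have ht' : Assigns S' F := fun C hC z hz => by
    by_cases hzv : z = v
    · simp [S', hzv]
    by_cases hzv' : z = -v
    · simp [S', hzv']
    have hnzv : -z ≠ v := fun h => hzv' (by omega)
    rcases ht C hC z hz with h | h
    · simp [S', h, hzv]
    · simp [S', h, hnzv]
  obtain ⟨D, hD, hS'D⟩ := exists_falsifies_of_not_sat hU.not_sat hS' ht'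
  have hDS : ∀ z ∈ D, z ≠ v → -z ∈ S := fun z hz hzv => by
    have := hS'D z hz
    simp only [S', mem_insert, mem_erase, neg_inj] at this
    tauto
  refine ⟨D, hD, by_contra fun hvD => ?_, hDS⟩
  have hDD₀ : D = D₀ := hU.hitting.eq_of_falsifies hS hD hD₀
    (fun z hz => hDS z hz (ne_of_mem_of_not_mem hz hvD)) hSD₀
  have := hS'D (-v) (hDD₀ ▸ hvD₀)
  simp only [S', neg_neg, mem_insert, mem_erase, ne_eq, not_true_eq_false, false_and,
    or_false] at this
  exact hv0 (by omega)

lemma IsClause.neg (hC : IsClause C) : IsClause (C.image (- ·)) := by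
  refine ⟨by simpa using hC.1, fun x hx hnx => ?_⟩
  simp only [mem_image] at hx hnx
  obtain ⟨y, hy, rfl⟩ := hx
  obtain ⟨y', hy', hyy'⟩ := hnx
  exact hC.2 y hy (by rwa [show y' = -y by omega] at hy')

lemma UHit.ldeg_neg_pos (hU : UHit F) (hC : C ∈ F) (hz : z ∈ C) : 0 < ldeg F (-z) := by
  obtain ⟨S, hS, hCS, ht⟩ := hU.isClauseSet.exists_assigns_superset (hU.isClauseSet C hC).neg
  have hSC : Falsifies S C := fun y hy => hCS (mem_image_of_mem _ hy)
  obtain ⟨D, hD, hzD, -⟩ := hU.exists_mem_of_flip hS ht (hSC z hz) hC hSC (by rwa [neg_neg])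
  exact ldeg_pos.2 ⟨D, hD, hzD⟩

lemma UHit.eq_of_ldeg_eq_one_of_clash (hU : UHit F) (hv : ldeg F v = 1) (hC : C ∈ F)
    (hvC : v ∈ C) (hD : D ∈ F) (hvD : -v ∈ D) (haC : a ∈ C) (haD : -a ∈ D) : a = v := by
  obtain ⟨S, hS, hDS, ht⟩ := hU.isClauseSet.exists_assigns_superset (hU.isClauseSet D hD).neg
  have hSD : Falsifies S D := fun y hy => hDS (mem_image_of_mem _ hy)
  obtain ⟨E, hE, hvE, hES⟩ := hU.exists_mem_of_flip hS ht (by simpa using hSD _ hvD) hD hSD hvD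
  obtain rfl := eq_of_ldeg_eq_one hv hE hvE hC hvC
  by_contra hav
  exact hS.2 a (by simpa using hSD _ haD) (hES a haC hav)

lemma UHit.ldeg_pos_of_abs_mem_cvar (hU : UHit F) (h : |z| ∈ cvar F) : 0 < ldeg F z := by
  obtain ⟨C, hC, y, hy, hyz⟩ := mem_cvar.1 h
  rcases abs_eq_abs.1 hyz with rfl | rfl
  · exact ldeg_pos.2 ⟨C, hC, hy⟩
  · simpa using hU.ldeg_neg_pos hC hy

end Assignments

section Singular

variable {F : Cls} {u b : ℤ}

lemma UHit.singularVar_iff (hU : UHit F) : SingularVar F u ↔ ∃ b, |b| = u ∧ ldeg F b = 1 := by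
  constructor
  · rintro ⟨hu, hmin⟩
    have hpos := hU.isClauseSet.pos_of_mem_cvar hu
    rcases min_choice (ldeg F u) (ldeg F (-u)) with h | h <;> rw [h] at hmin
    · exact ⟨u, abs_of_pos hpos, hmin⟩
    · exact ⟨-u, by rw [abs_neg, abs_of_pos hpos], hmin⟩
  · rintro ⟨b, rfl, hb⟩
    obtain ⟨C, hC, hbC⟩ := ldeg_pos.1 (by omega : 0 < ldeg F b)
    have hnb := hU.ldeg_neg_pos hC hbC
    refine ⟨abs_mem_cvar hC hbC, ?_⟩
    rcases abs_choice b with h | h <;> simp only [h, neg_neg] <;> omega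

lemma UHit.nonsingular_iff (hU : UHit F) : Nonsingular F ↔ ∀ b, ldeg F b ≠ 1 := by
  simp only [Nonsingular, hU.singularVar_iff]
  grind

lemma UHit.two_le_ldeg (hU : UHit F) (hns : Nonsingular F) (hb : |b| ∈ cvar F) :
    2 ≤ ldeg F b := by
  have := hU.ldeg_pos_of_abs_mem_cvar hb
  have := hU.nonsingular_iff.1 hns b
  omega

end Singular

/-- In the DP-reduction on a literal `l` occurring only in `C`, every other clause `D` is
replaced by `resolveWith C l D`. -/
def resolveWith (C : Finset ℤ) (l : ℤ) (D : Finset ℤ) : Finset ℤ :=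
  if -l ∈ D then (C ∪ D) \ {l, -l} else D

section SingularDP

variable {F : Cls} {C D D' A : Finset ℤ} {l z a : ℤ}

lemma mem_resolveWith (hlD : l ∉ D) :
    z ∈ resolveWith C l D ↔ z ≠ l ∧ z ≠ -l ∧ (z ∈ D ∨ -l ∈ D ∧ z ∈ C) := by
  unfold resolveWith
  split_ifs with h
  · simp only [mem_sdiff, mem_union, mem_insert, mem_singleton, h, true_and]
    tauto
  · constructor
    · exact fun hz => ⟨ne_of_mem_of_not_mem hz hlD, ne_of_mem_of_not_mem hz h, Or.inl hz⟩
    · rintro ⟨-, -, hz | ⟨h', -⟩⟩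
      exacts [hz, absurd h' h]

lemma notMem_of_ldeg_eq_one (hl : ldeg F l = 1) (hC : C ∈ F) (hlC : l ∈ C) (hD : D ∈ F)
    (hDC : D ≠ C) : l ∉ D :=
  fun h => hDC (eq_of_ldeg_eq_one hl hD h hC hlC)

lemma UHit.isClause_resolveWith (hU : UHit F) (hl : ldeg F l = 1) (hC : C ∈ F) (hlC : l ∈ C)
    (hD : D ∈ F) (hDC : D ≠ C) : IsClause (resolveWith C l D) := by
  have hlD := notMem_of_ldeg_eq_one hl hC hlC hD hDC
  refine ⟨fun h => ?_, fun x hx hnx => ?_⟩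
  · rcases ((mem_resolveWith hlD).1 h).2.2 with h | ⟨-, h⟩
    exacts [(hU.isClauseSet D hD).1 h, (hU.isClauseSet C hC).1 h]
  obtain ⟨hxl, hxnl, hx⟩ := (mem_resolveWith hlD).1 hx
  obtain ⟨-, -, hnx⟩ := (mem_resolveWith hlD).1 hnx
  rcases hx with hxD | ⟨hnlD, hxC⟩ <;> rcases hnx with hnxD | ⟨hnlD, hnxC⟩
  · exact (hU.isClauseSet D hD).2 x hxD hnxD
  · have := hU.eq_of_ldeg_eq_one_of_clash hl hC hlC hD hnlD hnxC (by rwa [neg_neg])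
    exact hxnl (by omega)
  · exact hxl (hU.eq_of_ldeg_eq_one_of_clash hl hC hlC hD hnlD hxC hnxD)
  · exact (hU.isClauseSet C hC).2 x hxC hnxC

/-- The clash of `D` and `D'` is not on `l`, since `l` occurs only in `C`. -/
lemma UHit.exists_clash_resolveWith (hU : UHit F) (hl : ldeg F l = 1) (hC : C ∈ F)
    (hlC : l ∈ C) (hD : D ∈ F) (hD' : D' ∈ F) (hDC : D ≠ C) (hD'C : D' ≠ C) (hDD' : D ≠ D') :
    ∃ z ∈ resolveWith C l D, -z ∈ resolveWith C l D' := by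
  have hlD := notMem_of_ldeg_eq_one hl hC hlC hD hDC
  have hlD' := notMem_of_ldeg_eq_one hl hC hlC hD' hD'C
  obtain ⟨z, hzD, hzD'⟩ := hU.hitting D hD D' hD' hDD'
  refine ⟨z, (mem_resolveWith hlD).2 ⟨?_, ?_, Or.inl hzD⟩,
    (mem_resolveWith hlD').2 ⟨?_, ?_, Or.inl hzD'⟩⟩
  · exact ne_of_mem_of_not_mem hzD hlD
  · rintro rfl
    exact hlD' (by rwa [neg_neg] at hzD')
  · exact ne_of_mem_of_not_mem hzD' hlD'
  · intro h
    exact hlD (neg_inj.1 h ▸ hzD)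

lemma UHit.injOn_resolveWith (hU : UHit F) (hl : ldeg F l = 1) (hC : C ∈ F) (hlC : l ∈ C) :
    Set.InjOn (resolveWith C l) (F.erase C) := by
  intro D hD D' hD' h
  simp only [coe_erase, Set.mem_sdiff, mem_coe, Set.mem_singleton_iff] at hD hD'
  by_contra hne
  obtain ⟨z, hz, hnz⟩ := hU.exists_clash_resolveWith hl hC hlC hD.1 hD'.1 hD.2 hD'.2 hne
  exact (hU.isClause_resolveWith hl hC hlC hD.1 hD.2).2 z hz (h ▸ hnz)

lemma UHit.dp_eq (hU : UHit F) (hl : ldeg F l = 1) (hC : C ∈ F) (hlC : l ∈ C) :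
    dp l F = (F.erase C).image (resolveWith C l) := by
  ext A
  simp only [dp, mem_union, mem_image, mem_filter, mem_product, mem_erase]
  constructor
  · rintro (⟨⟨C', D⟩, ⟨⟨hC', hD⟩, hCD⟩, rfl⟩ | ⟨hA, hlA, hnlA⟩)
    · have hl' : l ∈ C' ∩ D.image (- ·) := hCD ▸ mem_singleton_self l
      simp only [mem_inter, mem_image] at hl'
      obtain ⟨hlC', y, hy, hyl⟩ := hl'
      obtain rfl := eq_of_ldeg_eq_one hl hC' hlC' hC hlC
      obtain rfl : y = -l := by omega
      refine ⟨D, ⟨fun h : D = C' => (hU.isClauseSet C' hC').2 l hlC' (h ▸ hy), hD⟩, ?_⟩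
      simp [resolveWith, hy]
    · exact ⟨A, ⟨fun h => hlA (h ▸ hlC), hA⟩, by simp [resolveWith, hnlA]⟩
  · rintro ⟨D, ⟨hDC, hD⟩, rfl⟩
    by_cases hnlD : -l ∈ D
    · refine Or.inl ⟨(C, D), ⟨⟨hC, hD⟩, ?_⟩, by simp [resolveWith, hnlD]⟩
      ext a
      simp only [mem_inter, mem_image, mem_singleton]
      constructor
      · rintro ⟨haC, y, hy, rfl⟩
        exact hU.eq_of_ldeg_eq_one_of_clash hl hC hlC hD hnlD haC (by rwa [neg_neg])
      · rintro rfl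
        exact ⟨hlC, -a, hnlD, neg_neg a⟩
    · simp only [resolveWith, hnlD, if_false]
      exact Or.inr ⟨hD, notMem_of_ldeg_eq_one hl hC hlC hD hDC, not_false⟩

lemma UHit.mem_dp (hU : UHit F) (hl : ldeg F l = 1) (hC : C ∈ F) (hlC : l ∈ C) :
    A ∈ dp l F ↔ ∃ D ∈ F, D ≠ C ∧ resolveWith C l D = A := by
  rw [hU.dp_eq hl hC hlC, mem_image]
  exact ⟨fun ⟨D, hD, h⟩ => ⟨D, (mem_erase.1 hD).2, (mem_erase.1 hD).1, h⟩,
    fun ⟨D, hD, hDC, h⟩ => ⟨D, mem_erase.2 ⟨hDC, hD⟩, h⟩⟩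

lemma UHit.card_dp (hU : UHit F) (hl : ldeg F l = 1) (hC : C ∈ F) (hlC : l ∈ C) :
    #(dp l F) + 1 = #F := by
  rw [hU.dp_eq hl hC hlC, card_image_of_injOn (hU.injOn_resolveWith hl hC hlC),
    card_erase_add_one hC]

lemma UHit.resolveWith_mem_dp (hU : UHit F) (hl : ldeg F l = 1) (hC : C ∈ F) (hlC : l ∈ C)
    (hD : D ∈ F) (hDC : D ≠ C) : resolveWith C l D ∈ dp l F :=
  (hU.mem_dp hl hC hlC).2 ⟨D, hD, hDC, rfl⟩

/-- An assignment satisfying the reduct, with `l` set so as to satisfy `C` if the rest of the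
assignment does not, satisfies `F`. -/
lemma UHit.not_sat_dp (hU : UHit F) (hl : ldeg F l = 1) (hC : C ∈ F) (hlC : l ∈ C) :
    ¬ Sat (dp l F) := by
  rintro ⟨S, hS, hsat⟩
  set S₀ := S \ {l, -l}
  have hS₀ : IsClause S₀ := hS.mono sdiff_subset
  have hl0 : l ≠ 0 := fun h => (hU.isClauseSet C hC).1 (h ▸ hlC)
  have hit : ∀ D ∈ F, D ≠ C → ∃ z ∈ S₀, z ∈ D ∨ -l ∈ D ∧ z ∈ C := fun D hD hDC => by
    obtain ⟨z, hz⟩ := hsat _ (hU.resolveWith_mem_dp hl hC hlC hD hDC)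
    obtain ⟨hzS, hz⟩ := mem_inter.1 hz
    obtain ⟨hzl, hznl, hz⟩ := (mem_resolveWith (notMem_of_ldeg_eq_one hl hC hlC hD hDC)).1 hz
    exact ⟨z, by simp [S₀, hzS, hzl, hznl], hz⟩
  by_cases hCS : ∃ z ∈ S₀, z ∈ C
  · refine hU.not_sat
      ⟨insert (-l) S₀, hS₀.insert (neg_ne_zero.2 hl0) (by simp [S₀]), fun D hD => ?_⟩
    by_cases hDC : D = C
    · obtain ⟨z, hz, hzC⟩ := hCS
      exact ⟨z, mem_inter.2 ⟨mem_insert_of_mem hz, hDC ▸ hzC⟩⟩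
    by_cases hnlD : -l ∈ D
    · exact ⟨-l, mem_inter.2 ⟨mem_insert_self _ _, hnlD⟩⟩
    obtain ⟨z, hz, hzD | ⟨h, -⟩⟩ := hit D hD hDC
    exacts [⟨z, mem_inter.2 ⟨mem_insert_of_mem hz, hzD⟩⟩, absurd h hnlD]
  · refine hU.not_sat ⟨insert l S₀, hS₀.insert hl0 (by simp [S₀]), fun D hD => ?_⟩
    by_cases hDC : D = C
    · exact ⟨l, mem_inter.2 ⟨mem_insert_self _ _, hDC ▸ hlC⟩⟩
    obtain ⟨z, hz, hzD | ⟨-, hzC⟩⟩ := hit D hD hDC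
    exacts [⟨z, mem_inter.2 ⟨mem_insert_of_mem hz, hzD⟩⟩, absurd ⟨z, hz, hzC⟩ hCS]

lemma UHit.uHit_dp (hU : UHit F) (hl : ldeg F l = 1) (hC : C ∈ F) (hlC : l ∈ C) :
    UHit (dp l F) := by
  refine ⟨fun A hA => ?_, fun A hA B hB hAB => ?_, hU.not_sat_dp hl hC hlC⟩
  · obtain ⟨D, hD, hDC, rfl⟩ := (hU.mem_dp hl hC hlC).1 hA
    exact hU.isClause_resolveWith hl hC hlC hD hDC
  · obtain ⟨D, hD, hDC, rfl⟩ := (hU.mem_dp hl hC hlC).1 hA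
    obtain ⟨D', hD', hD'C, rfl⟩ := (hU.mem_dp hl hC hlC).1 hB
    exact hU.exists_clash_resolveWith hl hC hlC hD hD' hDC hD'C fun h => hAB (h ▸ rfl)

lemma UHit.cvar_dp (hU : UHit F) (hl : ldeg F l = 1) (hC : C ∈ F) (hlC : l ∈ C) :
    cvar (dp l F) = (cvar F).erase |l| := by
  ext w
  constructor
  · intro hw
    obtain ⟨A, hA, z, hz, rfl⟩ := mem_cvar.1 hw
    obtain ⟨D, hD, hDC, rfl⟩ := (hU.mem_dp hl hC hlC).1 hA
    obtain ⟨hzl, hznl, hz⟩ :=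
      (mem_resolveWith (notMem_of_ldeg_eq_one hl hC hlC hD hDC)).1 hz
    refine mem_erase.2 ⟨fun h => (abs_eq_abs.1 h).elim hzl hznl, ?_⟩
    rcases hz with hz | ⟨-, hz⟩
    exacts [abs_mem_cvar hD hz, abs_mem_cvar hC hz]
  · intro hw
    obtain ⟨hwl, hw⟩ := mem_erase.1 hw
    obtain ⟨A, hA, z, hz, rfl⟩ := mem_cvar.1 hw
    obtain ⟨D, hD, hDC, hzD⟩ : ∃ D ∈ F, D ≠ C ∧ (z ∈ D ∨ -l ∈ D ∧ z ∈ C) := by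
      by_cases hAC : A = C
      · obtain ⟨D, hD, hnlD⟩ := ldeg_pos.1 (hU.ldeg_neg_pos hC hlC)
        exact ⟨D, hD, fun h => (hU.isClauseSet C hC).2 l hlC (h ▸ hnlD), Or.inr ⟨hnlD, hAC ▸ hz⟩⟩
      · exact ⟨A, hA, hAC, Or.inl hz⟩
    refine abs_mem_cvar (hU.resolveWith_mem_dp hl hC hlC hD hDC)
      ((mem_resolveWith (notMem_of_ldeg_eq_one hl hC hlC hD hDC)).2 ⟨?_, ?_, hzD⟩)
    · rintro rfl
      exact hwl rfl
    · rintro rfl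
      exact hwl (abs_neg l)

lemma UHit.nvar_dp (hU : UHit F) (hl : ldeg F l = 1) (hC : C ∈ F) (hlC : l ∈ C) :
    nvar (dp l F) + 1 = nvar F := by
  rw [nvar, nvar, hU.cvar_dp hl hC hlC, card_erase_add_one (abs_mem_cvar hC hlC)]

lemma UHit.deficiency_dp (hU : UHit F) (hl : ldeg F l = 1) (hC : C ∈ F) (hlC : l ∈ C) :
    deficiency (dp l F) = deficiency F := by
  have hc := hU.card_dp hl hC hlC
  have hn := hU.nvar_dp hl hC hlC
  unfold deficiency
  omega

lemma UHit.ldeg_le_ldeg_dp (hU : UHit F) (hl : ldeg F l = 1) (hC : C ∈ F) (hlC : l ∈ C)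
    (haC : a ∉ C) (hanl : a ≠ -l) : ldeg F a ≤ ldeg (dp l F) a := by
  refine card_le_card_of_injOn (resolveWith C l) (fun D hD => ?_)
    ((hU.injOn_resolveWith hl hC hlC).mono fun D hD => ?_)
  · obtain ⟨hD, haD⟩ := mem_filter.1 hD
    have hDC : D ≠ C := fun h => haC (h ▸ haD)
    refine mem_filter.2 ⟨hU.resolveWith_mem_dp hl hC hlC hD hDC, ?_⟩
    exact (mem_resolveWith (notMem_of_ldeg_eq_one hl hC hlC hD hDC)).2
      ⟨fun h => haC (h ▸ hlC), hanl, Or.inl haD⟩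
  · obtain ⟨hD, haD⟩ := mem_filter.1 hD
    exact mem_erase.2 ⟨fun h => haC (h ▸ haD), hD⟩

lemma UHit.ldeg_neg_le_ldeg_dp (hU : UHit F) (hl : ldeg F l = 1) (hC : C ∈ F) (hlC : l ∈ C)
    (haC : a ∈ C) (hal : a ≠ l) (hanl : a ≠ -l) : ldeg F (-l) ≤ ldeg (dp l F) a := by
  have hDC : ∀ D, -l ∈ D → D ≠ C := fun D hnlD h => (hU.isClauseSet C hC).2 l hlC (h ▸ hnlD)
  refine card_le_card_of_injOn (resolveWith C l) (fun D hD => ?_)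
    ((hU.injOn_resolveWith hl hC hlC).mono fun D hD => ?_)
  · obtain ⟨hD, hnlD⟩ := mem_filter.1 hD
    refine mem_filter.2 ⟨hU.resolveWith_mem_dp hl hC hlC hD (hDC D hnlD), ?_⟩
    exact (mem_resolveWith (notMem_of_ldeg_eq_one hl hC hlC hD (hDC D hnlD))).2
      ⟨hal, hanl, Or.inr ⟨hnlD, haC⟩⟩
  · obtain ⟨hD, hnlD⟩ := mem_filter.1 hD
    exact mem_erase.2 ⟨hDC D hnlD, hD⟩

end SingularDP

section Reduction

variable {F : Cls} {W : Finset ℤ} {w : ℤ}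

/-- One singular DP-step on a degree-one literal `b ∈ W` raises every other literal of `W` to
degree at least `ldeg F (-b) ≥ 2` and lowers no literal outside `W`. -/
lemma UHit.exists_reduct_of_degOne_mem (hU : UHit F) (hW : W ∈ F) (X : Set ℤ)
    (hF : ∀ b, ldeg F b = 1 → |b| ∉ X → b ∈ W ∧ 2 ≤ ldeg F (-b)) :
    ∃ G, UHit G ∧ deficiency G = deficiency F ∧ nvar F ≤ nvar G + 1 ∧
      ∀ a, ldeg G a = 1 → |a| ∈ X := by
  by_cases h : ∀ a, ldeg F a = 1 → |a| ∈ X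
  · exact ⟨F, hU, rfl, by omega, h⟩
  obtain ⟨b, hb, hbX⟩ : ∃ b, ldeg F b = 1 ∧ |b| ∉ X := by simpa using h
  obtain ⟨hbW, hnb⟩ := hF b hb hbX
  refine ⟨dp b F, hU.uHit_dp hb hW hbW, hU.deficiency_dp hb hW hbW,
    (hU.nvar_dp hb hW hbW).symm.le, fun a ha => by_contra fun haX => ?_⟩
  obtain ⟨hab, haF⟩ :=
    mem_erase.1 (hU.cvar_dp hb hW hbW ▸ abs_mem_cvar_of_ldeg_pos (by omega : 0 < ldeg (dp b F) a))
  have hab' : a ≠ b := by rintro rfl; exact hab rfl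
  have hanb : a ≠ -b := by rintro rfl; exact hab (abs_neg b)
  by_cases haW : a ∈ W
  · have := hU.ldeg_neg_le_ldeg_dp hb hW hbW haW hab' hanb
    omega
  · have := hU.ldeg_le_ldeg_dp hb hW hbW haW hanb
    have := hU.ldeg_pos_of_abs_mem_cvar haF
    exact haW (hF a (by omega) haX).1

/-- After eliminating the only singular variable, via its literal `l` occurring only in `C`,
all degree-one literals lie in `C`, hence in every resolvent on `l`, and their complements
occur at least twice. -/
lemma UHit.exists_nonsingular_reduct (hU : UHit F) (hF : ∀ b, ldeg F b = 1 → |b| = w) :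
    ∃ G, UHit G ∧ Nonsingular G ∧ deficiency G = deficiency F ∧ nvar F ≤ nvar G + 2 := by
  by_cases h : ∀ b, ldeg F b ≠ 1
  · exact ⟨F, hU, hU.nonsingular_iff.2 h, rfl, by omega⟩
  obtain ⟨l, hl⟩ : ∃ l, ldeg F l = 1 := by simpa using h
  obtain ⟨C, hC, hlC⟩ := ldeg_pos.1 (by omega : 0 < ldeg F l)
  obtain ⟨D, hD, hnlD⟩ := ldeg_pos.1 (hU.ldeg_neg_pos hC hlC)
  have hDC : D ≠ C := fun h => (hU.isClauseSet C hC).2 l hlC (h ▸ hnlD)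
  have hdeg : ∀ a, ldeg (dp l F) a = 1 → |a| ∉ (∅ : Set ℤ) →
      a ∈ resolveWith C l D ∧ 2 ≤ ldeg (dp l F) (-a) := by
    rintro a ha -
    obtain ⟨hal, haF⟩ :=
      mem_erase.1 (hU.cvar_dp hl hC hlC ▸ abs_mem_cvar_of_ldeg_pos (by omega : 0 < ldeg (dp l F) a))
    have hal' : a ≠ l := by rintro rfl; exact hal rfl
    have hanl : a ≠ -l := by rintro rfl; exact hal (abs_neg l)
    have h2 : ∀ c, |c| = |a| → 2 ≤ ldeg F c := fun c hc => by
      have := hU.ldeg_pos_of_abs_mem_cvar (hc ▸ haF)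
      have : ldeg F c ≠ 1 := fun h1 => hal (hc ▸ (hF c h1).trans (hF l hl).symm)
      omega
    have haC : a ∈ C := by
      by_contra haC
      have := hU.ldeg_le_ldeg_dp hl hC hlC haC hanl
      have := h2 a rfl
      omega
    refine ⟨(mem_resolveWith (notMem_of_ldeg_eq_one hl hC hlC hD hDC)).2
      ⟨hal', hanl, Or.inr ⟨hnlD, haC⟩⟩, (h2 (-a) (abs_neg a)).trans ?_⟩
    exact hU.ldeg_le_ldeg_dp hl hC hlC ((hU.isClauseSet C hC).2 a haC) fun h => hal' (neg_inj.1 h)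
  obtain ⟨G, hG, hδ, hn, hG1⟩ := (hU.uHit_dp hl hC hlC).exists_reduct_of_degOne_mem
    (hU.resolveWith_mem_dp hl hC hlC hD hDC) ∅ hdeg
  refine ⟨G, hG, hG.nonsingular_iff.2 fun b hb => Set.notMem_empty _ (hG1 b hb), ?_, ?_⟩
  · rw [hδ, hU.deficiency_dp hl hC hlC]
  · have := hU.nvar_dp hl hC hlC
    omega

end Reduction

def fsResolve (F : Cls) (E : Finset ℤ) (x : ℤ) : Cls :=
  insert E (F \ {insert x E, insert (-x) E})

section FsResolution

variable {F : Cls} {E A : Finset ℤ} {x b : ℤ}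

lemma mem_fsResolve :
    A ∈ fsResolve F E x ↔ A = E ∨ A ∈ F ∧ A ≠ insert x E ∧ A ≠ insert (-x) E := by
  simp [fsResolve]

lemma UHit.uHit_fsResolve (hU : UHit F) (hE : IsClause E) (hxF : insert x E ∈ F)
    (hnxF : insert (-x) E ∈ F) : UHit (fsResolve F E x) := by
  have hclash : ∀ B ∈ F, B ≠ insert x E → B ≠ insert (-x) E → ∃ z ∈ E, -z ∈ B := by
    intro B hB hBx hBnx
    obtain ⟨z₁, hz₁, h₁⟩ := hU.hitting _ hxF B hB (Ne.symm hBx)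
    obtain ⟨z₂, hz₂, h₂⟩ := hU.hitting _ hnxF B hB (Ne.symm hBnx)
    rcases mem_insert.1 hz₁ with rfl | hz₁
    · rcases mem_insert.1 hz₂ with rfl | hz₂
      · exact absurd h₁ ((hU.isClauseSet B hB).2 _ (by rwa [neg_neg] at h₂))
      · exact ⟨z₂, hz₂, h₂⟩
    · exact ⟨z₁, hz₁, h₁⟩
  refine ⟨fun A hA => ?_, fun A hA B hB hAB => ?_, fun ⟨S, hS, hsat⟩ => hU.not_sat ⟨S, hS, ?_⟩⟩
  · rcases mem_fsResolve.1 hA with rfl | ⟨hA, -⟩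
    exacts [hE, hU.isClauseSet A hA]
  · rcases mem_fsResolve.1 hA with hAE | ⟨hA, hAx, hAnx⟩ <;>
      rcases mem_fsResolve.1 hB with hBE | ⟨hB, hBx, hBnx⟩
    · exact absurd (hAE.trans hBE.symm) hAB
    · exact hAE ▸ hclash B hB hBx hBnx
    · obtain ⟨z, hz, hnz⟩ := hclash A hA hAx hAnx
      exact ⟨-z, hnz, hBE ▸ by rwa [neg_neg]⟩
    · exact hU.hitting A hA B hB hAB
  · intro D hD
    obtain ⟨z, hz⟩ := hsat E (mem_insert_self _ _)
    obtain ⟨hzS, hzE⟩ := mem_inter.1 hz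
    by_cases hDx : D = insert x E
    · exact ⟨z, mem_inter.2 ⟨hzS, hDx ▸ mem_insert_of_mem hzE⟩⟩
    by_cases hDnx : D = insert (-x) E
    · exact ⟨z, mem_inter.2 ⟨hzS, hDnx ▸ mem_insert_of_mem hzE⟩⟩
    exact hsat D (mem_fsResolve.2 (Or.inr ⟨hD, hDx, hDnx⟩))

lemma cvar_fsResolve (hxF : insert x E ∈ F)
    (hx : |x| ∈ cvar (F \ {insert x E, insert (-x) E})) : cvar (fsResolve F E x) = cvar F := by
  apply Subset.antisymm
  · intro w hw
    obtain ⟨A, hA, z, hz, rfl⟩ := mem_cvar.1 hw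
    rcases mem_fsResolve.1 hA with rfl | ⟨hA, -⟩
    exacts [abs_mem_cvar hxF (mem_insert_of_mem hz), abs_mem_cvar hA hz]
  · intro w hw
    obtain ⟨A, hA, z, hz, rfl⟩ := mem_cvar.1 hw
    by_cases hzE : z ∈ E
    · exact abs_mem_cvar (mem_insert_self _ _) hzE
    by_cases hzx : |z| = |x|
    · exact hzx ▸ cvar_mono (subset_insert _ _) hx
    have hA' : ∀ y, |y| = |x| → A ≠ insert y E := fun y hy h => by
      rcases mem_insert.1 (h ▸ hz) with rfl | hz
      exacts [hzx hy, hzE hz]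
    exact abs_mem_cvar (mem_fsResolve.2 (Or.inr ⟨hA, hA' x rfl, hA' (-x) (abs_neg x)⟩)) hz

lemma card_fsResolve (hx0 : x ≠ 0) (hxE : x ∉ E) (hxF : insert x E ∈ F)
    (hnxF : insert (-x) E ∈ F) (hEF : E ∉ F) : #(fsResolve F E x) + 1 = #F := by
  have hpair : insert x E ≠ insert (-x) E := fun h => by
    rcases mem_insert.1 (h ▸ mem_insert_self x E) with h | h
    exacts [hx0 (by omega), hxE h]
  have hsub : {insert x E, insert (-x) E} ⊆ F := insert_subset hxF (singleton_subset_iff.2 hnxF)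
  rw [fsResolve, card_insert_of_notMem fun h => hEF (mem_sdiff.1 h).1,
    ← card_sdiff_add_card_eq_card hsub, card_pair hpair]

lemma ldeg_le_ldeg_fsResolve (hbE : b ∉ E) (hbx : b ≠ x) (hbnx : b ≠ -x) :
    ldeg F b ≤ ldeg (fsResolve F E x) b := by
  refine card_le_card fun D hD => ?_
  obtain ⟨hD, hbD⟩ := mem_filter.1 hD
  have hne : ∀ y, b ≠ y → D ≠ insert y E := fun y hby h => by
    rcases mem_insert.1 (h ▸ hbD) with h | h
    exacts [hby h, hbE h]
  exact mem_filter.2 ⟨mem_fsResolve.2 (Or.inr ⟨hD, hne x hbx, hne (-x) hbnx⟩), hbD⟩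

/-- In a nonsingular `F`, only literals of `E` lose occurrences under fs-resolution, and only
one each, so afterwards every degree-one literal outside `±x` lies in `E`. -/
lemma StrictlyFsResolvable.exists_reduct (hfs : StrictlyFsResolvable F) (hU : UHit F)
    (hns : Nonsingular F) :
    ∃ G W w, UHit G ∧ W ∈ G ∧ deficiency G = deficiency F - 1 ∧ nvar G = nvar F ∧
      ∀ b, ldeg G b = 1 → |b| ∉ ({w} : Set ℤ) → b ∈ W ∧ 2 ≤ ldeg G (-b) := by
  obtain ⟨E, x, hE, hx0, hxE, -, hxF, hnxF, hEF, hx⟩ := hfs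
  have hcvar := cvar_fsResolve hxF hx
  have hnvar : nvar (fsResolve F E x) = nvar F := by rw [nvar, nvar, hcvar]
  refine ⟨fsResolve F E x, E, |x|, hU.uHit_fsResolve hE hxF hnxF, mem_insert_self _ _, ?_,
    hnvar, ?_⟩
  · have := card_fsResolve hx0 hxE hxF hnxF hEF
    unfold deficiency
    omega
  intro b hb hbx
  have hbF : |b| ∈ cvar F := hcvar ▸ abs_mem_cvar_of_ldeg_pos (by omega)
  have hbx' : b ≠ x := by rintro rfl; exact hbx rfl
  have hbnx : b ≠ -x := by rintro rfl; exact hbx (abs_neg x)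
  have hbE : b ∈ E := by
    by_contra hbE
    have := ldeg_le_ldeg_fsResolve (F := F) hbE hbx' hbnx
    have := hU.two_le_ldeg hns hbF
    omega
  refine ⟨hbE, (hU.two_le_ldeg hns (by rwa [abs_neg])).trans ?_⟩
  exact ldeg_le_ldeg_fsResolve (hE.2 b hbE) (fun h => hbnx (by omega)) fun h => hbx' (by omega)

end FsResolution

theorem stmt2_general (F : Cls) (k : ℤ) (hU : UHit F) (hns : Nonsingular F)
    (hδ : deficiency F = k) (hfs : StrictlyFsResolvable F) (N : ℕ)
    (hN : ∀ G : Cls, UHit G → Nonsingular G → deficiency G = k - 1 → nvar G ≤ N) :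
    nvar F ≤ N + 3 := by
  obtain ⟨F₁, W, w, hU₁, hW, hδ₁, hn₁, hdeg₁⟩ := hfs.exists_reduct hU hns
  obtain ⟨F₂, hU₂, hδ₂, hn₂, hdeg₂⟩ := hU₁.exists_reduct_of_degOne_mem hW {w} hdeg₁
  obtain ⟨F₃, hU₃, hns₃, hδ₃, hn₃⟩ := hU₂.exists_nonsingular_reduct hdeg₂
  have := hN F₃ hU₃ hns₃ (by rw [hδ₃, hδ₂, hδ₁, hδ])
  omega

/-- If a nonsingular UHIT `F` with deficiency `k ≥ 2` is strictly fs-resolvable, and all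
nonsingular UHITs of deficiency `k - 1` have at most `N` variables, then `n(F) ≤ N + 3`. -/
theorem stmt2 (F : Cls) (k : ℤ) (hk : 2 ≤ k) (hU : UHit F) (hns : Nonsingular F)
    (hδ : deficiency F = k) (hfs : StrictlyFsResolvable F) (N : ℕ)
    (hN : ∀ G : Cls, UHit G → Nonsingular G → deficiency G = k - 1 → nvar G ≤ N) :
    nvar F ≤ N + 3 :=
  stmt2_general F k hU hns hδ hfs N hN
end

section
/- For every integer k ≥ 2 there exists a nonsingular unsatisfiable hitting clause-set F with δ(F) = k and n(F) = 4k − 5. -/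
section Aux

lemma finset_ne {α : Type*} {s t : Finset α} {x : α} (hx : x ∈ s) (hx' : x ∉ t) : s ≠ t :=
  fun h => hx' (h ▸ hx)

lemma mem_cvar_iff {F : Cls} {w : ℤ} : w ∈ cvar F ↔ ∃ C ∈ F, ∃ x ∈ C, |x| = w := by
  simp [cvar, Finset.mem_sup, Finset.mem_image]

lemma abs_mem_cvar_s4 {F : Cls} {C : Finset ℤ} {x : ℤ} (hC : C ∈ F) (hx : x ∈ C) : |x| ∈ cvar F :=
  mem_cvar_iff.2 ⟨C, hC, x, hx, rfl⟩

lemma notMem_of_abs_notMem {F : Cls} {C : Finset ℤ} {x : ℤ} (hC : C ∈ F)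
    (h : |x| ∉ cvar F) : x ∉ C := fun hx => h (abs_mem_cvar_s4 hC hx)

lemma two_le_ldeg {F : Cls} {x : ℤ} {C1 C2 : Finset ℤ} (h1 : C1 ∈ F) (h2 : C2 ∈ F)
    (hne : C1 ≠ C2) (hx1 : x ∈ C1) (hx2 : x ∈ C2) : 2 ≤ ldeg F x := by
  have hsub : ({C1, C2} : Cls) ⊆ F.filter (fun C => x ∈ C) := by
    intro C hC
    rcases Finset.mem_insert.1 hC with rfl | hC
    · exact Finset.mem_filter.2 ⟨h1, hx1⟩
    · rw [Finset.mem_singleton] at hC; subst hC; exact Finset.mem_filter.2 ⟨h2, hx2⟩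
  calc 2 = ({C1, C2} : Cls).card := (Finset.card_pair hne).symm
    _ ≤ _ := Finset.card_le_card hsub

/-- Both literals of every variable occur at least twice. -/
def Deg2 (F : Cls) : Prop :=
  ∀ x : ℤ, |x| ∈ cvar F → ∃ C1 ∈ F, ∃ C2 ∈ F, C1 ≠ C2 ∧ x ∈ C1 ∧ x ∈ C2

lemma cvar_pos {F : Cls} (hF : IsClauseSet F) {w : ℤ} (hw : w ∈ cvar F) : 0 < w := by
  obtain ⟨C, hC, x, hx, rfl⟩ := mem_cvar_iff.1 hw
  have hx0 : x ≠ 0 := fun h => (hF C hC).1 (h ▸ hx)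
  exact abs_pos.2 hx0

lemma nonsingular_of_deg2 {F : Cls} (hcs : IsClauseSet F) (h : Deg2 F) : Nonsingular F := by
  intro v hv
  obtain ⟨hv1, hv2⟩ := hv
  have hpos : 0 < v := cvar_pos hcs hv1
  have habs : |v| = v := abs_of_pos hpos
  obtain ⟨C1, h1, C2, h2, hne, hx1, hx2⟩ := h v (by rw [habs]; exact hv1)
  obtain ⟨D1, g1, D2, g2, gne, gy1, gy2⟩ := h (-v) (by rw [abs_neg, habs]; exact hv1)
  have t1 := two_le_ldeg h1 h2 hne hx1 hx2
  have t2 := two_le_ldeg g1 g2 gne gy1 gy2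
  omega

end Aux
section Comb

/-- The full product of two clause-sets over a fresh variable `v`. -/
def comb (F G : Cls) (v : ℤ) : Cls :=
  F.image (fun C => insert v C) ∪ G.image (fun D => insert (-v) D)

variable {F G : Cls} {v : ℤ}

lemma mem_comb {A : Finset ℤ} :
    A ∈ comb F G v ↔ (∃ C ∈ F, A = insert v C) ∨ (∃ D ∈ G, A = insert (-v) D) := by
  simp [comb, eq_comm]

lemma comb_sides_ne (hv : 0 < v) (hvF : v ∉ cvar F) {C D : Finset ℤ}
    (hC : C ∈ F) : insert v C ≠ insert (-v) D := by
  intro h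
  have h1 : -v ∈ insert v C := h ▸ Finset.mem_insert_self _ _
  rcases Finset.mem_insert.1 h1 with h2 | h2
  · omega
  · exact notMem_of_abs_notMem hC (by rwa [abs_neg, abs_of_pos hv]) h2

lemma comb_inj_left (hvF : v ∉ cvar F) (hv : 0 < v) {C D : Finset ℤ}
    (hC : C ∈ F) (hD : D ∈ F) (h : insert v C = insert v D) : C = D := by
  have h1 : v ∉ C := notMem_of_abs_notMem hC (by rwa [abs_of_pos hv])
  have h2 : v ∉ D := notMem_of_abs_notMem hD (by rwa [abs_of_pos hv])
  rw [← Finset.erase_insert h1, ← Finset.erase_insert h2, h]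

lemma comb_inj_right (hvG : v ∉ cvar G) (hv : 0 < v) {C D : Finset ℤ}
    (hC : C ∈ G) (hD : D ∈ G) (h : insert (-v) C = insert (-v) D) : C = D := by
  have h1 : -v ∉ C := notMem_of_abs_notMem hC (by rwa [abs_neg, abs_of_pos hv])
  have h2 : -v ∉ D := notMem_of_abs_notMem hD (by rwa [abs_neg, abs_of_pos hv])
  rw [← Finset.erase_insert h1, ← Finset.erase_insert h2, h]

lemma comb_card (hv : 0 < v) (hvF : v ∉ cvar F) (hvG : v ∉ cvar G) :
    (comb F G v).card = F.card + G.card := by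
  rw [comb, Finset.card_union_of_disjoint, Finset.card_image_of_injOn
      (fun C hC D hD h => comb_inj_left hvF hv hC hD h),
    Finset.card_image_of_injOn (fun C hC D hD h => comb_inj_right hvG hv hC hD h)]
  rw [Finset.disjoint_left]
  rintro A hA hA'
  obtain ⟨C, hC, rfl⟩ := Finset.mem_image.1 hA
  obtain ⟨D, hD, hDe⟩ := Finset.mem_image.1 hA'
  exact comb_sides_ne hv hvF hC hDe.symm

lemma comb_cvar (hv : 0 < v) (hF : F.Nonempty) (hG : G.Nonempty) :
    cvar (comb F G v) = insert v (cvar F ∪ cvar G) := by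
  ext w
  rw [mem_cvar_iff, Finset.mem_insert, Finset.mem_union]
  constructor
  · rintro ⟨A, hA, x, hx, rfl⟩
    rcases mem_comb.1 hA with ⟨C, hC, rfl⟩ | ⟨D, hD, rfl⟩
    · rcases Finset.mem_insert.1 hx with rfl | hx
      · exact Or.inl (abs_of_pos hv)
      · exact Or.inr (Or.inl (abs_mem_cvar_s4 hC hx))
    · rcases Finset.mem_insert.1 hx with rfl | hx
      · rw [abs_neg]; exact Or.inl (abs_of_pos hv)
      · exact Or.inr (Or.inr (abs_mem_cvar_s4 hD hx))
  · rintro (rfl | hw | hw)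
    · obtain ⟨C, hC⟩ := hF
      exact ⟨insert w C, mem_comb.2 (Or.inl ⟨C, hC, rfl⟩), w, Finset.mem_insert_self _ _,
        abs_of_pos hv⟩
    · obtain ⟨C, hC, x, hx, rfl⟩ := mem_cvar_iff.1 hw
      exact ⟨insert v C, mem_comb.2 (Or.inl ⟨C, hC, rfl⟩), x, Finset.mem_insert_of_mem hx, rfl⟩
    · obtain ⟨D, hD, x, hx, rfl⟩ := mem_cvar_iff.1 hw
      exact ⟨insert (-v) D, mem_comb.2 (Or.inr ⟨D, hD, rfl⟩), x, Finset.mem_insert_of_mem hx, rfl⟩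

lemma comb_clauseSet (hv : 0 < v) (hvF : v ∉ cvar F) (hvG : v ∉ cvar G)
    (hFc : IsClauseSet F) (hGc : IsClauseSet G) : IsClauseSet (comb F G v) := by
  intro A hA
  rcases mem_comb.1 hA with ⟨C, hC, rfl⟩ | ⟨D, hD, rfl⟩
  · obtain ⟨h0, hcl⟩ := hFc C hC
    refine ⟨?_, ?_⟩
    · intro h; rcases Finset.mem_insert.1 h with h | h
      · omega
      · exact h0 h
    · intro x hx hx'
      have hnv : -v ∉ C := notMem_of_abs_notMem hC (by rwa [abs_neg, abs_of_pos hv])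
      have hvv : v ∉ C := notMem_of_abs_notMem hC (by rwa [abs_of_pos hv])
      rcases Finset.mem_insert.1 hx with rfl | hx2 <;>
        rcases Finset.mem_insert.1 hx' with h' | h'
      · omega
      · exact hnv h'
      · have hxv : x = -v := by omega
        subst hxv; exact hnv hx2
      · exact hcl x hx2 h'
  · obtain ⟨h0, hcl⟩ := hGc D hD
    refine ⟨?_, ?_⟩
    · intro h; rcases Finset.mem_insert.1 h with h | h
      · omega
      · exact h0 h
    · intro x hx hx'
      have hnv : -v ∉ D := notMem_of_abs_notMem hD (by rwa [abs_neg, abs_of_pos hv])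
      have hvv : v ∉ D := notMem_of_abs_notMem hD (by rwa [abs_of_pos hv])
      rcases Finset.mem_insert.1 hx with rfl | hx2 <;>
        rcases Finset.mem_insert.1 hx' with h' | h'
      · omega
      · exact hvv (by simpa using h')
      · have hxv : x = v := by omega
        subst hxv; exact hvv hx2
      · exact hcl x hx2 h'

lemma comb_hitting (hv : 0 < v) (hvF : v ∉ cvar F) (hvG : v ∉ cvar G)
    (hFh : Hitting F) (hGh : Hitting G) : Hitting (comb F G v) := by
  intro A hA B hB hne
  rcases mem_comb.1 hA with ⟨C, hC, rfl⟩ | ⟨C, hC, rfl⟩ <;>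
    rcases mem_comb.1 hB with ⟨D, hD, rfl⟩ | ⟨D, hD, rfl⟩
  · have hCD : C ≠ D := fun h => hne (by rw [h])
    obtain ⟨x, hx, hx'⟩ := hFh C hC D hD hCD
    exact ⟨x, Finset.mem_insert_of_mem hx, Finset.mem_insert_of_mem hx'⟩
  · exact ⟨v, Finset.mem_insert_self _ _, Finset.mem_insert_self _ _⟩
  · exact ⟨-v, Finset.mem_insert_self _ _, by rw [neg_neg]; exact Finset.mem_insert_self _ _⟩
  · have hCD : C ≠ D := fun h => hne (by rw [h])
    obtain ⟨x, hx, hx'⟩ := hGh C hC D hD hCD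
    exact ⟨x, Finset.mem_insert_of_mem hx, Finset.mem_insert_of_mem hx'⟩

lemma comb_unsat (hFu : ¬ Sat F) (hGu : ¬ Sat G) : ¬ Sat (comb F G v) := by
  rintro ⟨S, hS, hsat⟩
  by_cases hvS : v ∈ S
  · refine hGu ⟨S, hS, fun D hD => ?_⟩
    obtain ⟨y, hy⟩ := hsat (insert (-v) D) (mem_comb.2 (Or.inr ⟨D, hD, rfl⟩))
    rw [Finset.mem_inter] at hy
    rcases Finset.mem_insert.1 hy.2 with rfl | h
    · exact absurd hvS (by simpa using hS.2 _ hy.1)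
    · exact ⟨y, Finset.mem_inter.2 ⟨hy.1, h⟩⟩
  · refine hFu ⟨S, hS, fun C hC => ?_⟩
    obtain ⟨y, hy⟩ := hsat (insert v C) (mem_comb.2 (Or.inl ⟨C, hC, rfl⟩))
    rw [Finset.mem_inter] at hy
    rcases Finset.mem_insert.1 hy.2 with rfl | h
    · exact absurd hy.1 hvS
    · exact ⟨y, Finset.mem_inter.2 ⟨hy.1, h⟩⟩

lemma comb_deg2 (hv : 0 < v) (hvF : v ∉ cvar F) (hvG : v ∉ cvar G)
    (hF2 : 2 ≤ F.card) (hG2 : 2 ≤ G.card) (hFd : Deg2 F) (hGd : Deg2 G)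
    (hFne : F.Nonempty) (hGne : G.Nonempty) : Deg2 (comb F G v) := by
  intro x hx
  rw [comb_cvar hv hFne hGne, Finset.mem_insert, Finset.mem_union] at hx
  rcases hx with hx | hx | hx
  · rcases (abs_eq hv.le).1 hx with rfl | rfl
    · obtain ⟨C1, h1, C2, h2, hne⟩ := Finset.one_lt_card.1 (by omega : 1 < F.card)
      exact ⟨insert x C1, mem_comb.2 (Or.inl ⟨C1, h1, rfl⟩),
        insert x C2, mem_comb.2 (Or.inl ⟨C2, h2, rfl⟩),
        fun h => hne (comb_inj_left hvF hv h1 h2 h),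
        Finset.mem_insert_self _ _, Finset.mem_insert_self _ _⟩
    · obtain ⟨C1, h1, C2, h2, hne⟩ := Finset.one_lt_card.1 (by omega : 1 < G.card)
      exact ⟨insert (-v) C1, mem_comb.2 (Or.inr ⟨C1, h1, rfl⟩),
        insert (-v) C2, mem_comb.2 (Or.inr ⟨C2, h2, rfl⟩),
        fun h => hne (comb_inj_right hvG hv h1 h2 h),
        Finset.mem_insert_self _ _, Finset.mem_insert_self _ _⟩
  · obtain ⟨C1, h1, C2, h2, hne, hx1, hx2⟩ := hFd x hx
    exact ⟨insert v C1, mem_comb.2 (Or.inl ⟨C1, h1, rfl⟩),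
      insert v C2, mem_comb.2 (Or.inl ⟨C2, h2, rfl⟩),
      fun h => hne (comb_inj_left hvF hv h1 h2 h),
      Finset.mem_insert_of_mem hx1, Finset.mem_insert_of_mem hx2⟩
  · obtain ⟨C1, h1, C2, h2, hne, hx1, hx2⟩ := hGd x hx
    exact ⟨insert (-v) C1, mem_comb.2 (Or.inr ⟨C1, h1, rfl⟩),
      insert (-v) C2, mem_comb.2 (Or.inr ⟨C2, h2, rfl⟩),
      fun h => hne (comb_inj_right hvG hv h1 h2 h),
      Finset.mem_insert_of_mem hx1, Finset.mem_insert_of_mem hx2⟩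

end Comb
section Base

/-- A copy of D3 on variables `4j+1, 4j+2, 4j+3`. -/
def D3c (j : ℕ) : Cls :=
  {({4*(j:ℤ)+1, 4*(j:ℤ)+2, 4*(j:ℤ)+3} : Finset ℤ),
   {-(4*(j:ℤ)+1), -(4*(j:ℤ)+2), -(4*(j:ℤ)+3)},
   {-(4*(j:ℤ)+1), 4*(j:ℤ)+2},
   {-(4*(j:ℤ)+2), 4*(j:ℤ)+3},
   {-(4*(j:ℤ)+3), 4*(j:ℤ)+1}}

lemma D3c_clauseSet (j : ℕ) : IsClauseSet (D3c j) := by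
  intro C hC
  simp only [D3c, Finset.mem_insert, Finset.mem_singleton] at hC
  rcases hC with rfl | rfl | rfl | rfl | rfl <;>
    refine ⟨by simp; omega, ?_⟩ <;> intro x hx hx' <;> simp at hx hx' <;> omega

set_option maxHeartbeats 3000000 in
lemma D3c_hitting (j : ℕ) : Hitting (D3c j) := by
  intro C hC D hD hne
  simp only [D3c, Finset.mem_insert, Finset.mem_singleton] at hC hD
  rcases hC with rfl | rfl | rfl | rfl | rfl <;> rcases hD with rfl | rfl | rfl | rfl | rfl <;>
    first
    | exact absurd rfl hne
    | (refine ⟨4*(j:ℤ)+1, ?_, ?_⟩ <;> simp <;> done)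
    | (refine ⟨4*(j:ℤ)+2, ?_, ?_⟩ <;> simp <;> done)
    | (refine ⟨4*(j:ℤ)+3, ?_, ?_⟩ <;> simp <;> done)
    | (refine ⟨-(4*(j:ℤ)+1), ?_, ?_⟩ <;> simp <;> done)
    | (refine ⟨-(4*(j:ℤ)+2), ?_, ?_⟩ <;> simp <;> done)
    | (refine ⟨-(4*(j:ℤ)+3), ?_, ?_⟩ <;> simp <;> done)

lemma triangle_unsat {a b c : ℤ} {F : Cls}
    (m1 : ({a, b, c} : Finset ℤ) ∈ F) (m2 : ({-a, -b, -c} : Finset ℤ) ∈ F)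
    (m3 : ({-a, b} : Finset ℤ) ∈ F) (m4 : ({-b, c} : Finset ℤ) ∈ F)
    (m5 : ({-c, a} : Finset ℤ) ∈ F) : ¬ Sat F := by
  rintro ⟨S, hS, h⟩
  have hab : a ∈ S → b ∈ S := by
    intro haS
    obtain ⟨y, hy⟩ := h _ m3
    rw [Finset.mem_inter] at hy
    rcases Finset.mem_insert.1 hy.2 with rfl | hy2
    · exact absurd hy.1 (hS.2 a haS)
    · rw [Finset.mem_singleton] at hy2; subst hy2; exact hy.1
  have hbc : b ∈ S → c ∈ S := by
    intro hbS
    obtain ⟨y, hy⟩ := h _ m4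
    rw [Finset.mem_inter] at hy
    rcases Finset.mem_insert.1 hy.2 with rfl | hy2
    · exact absurd hy.1 (hS.2 b hbS)
    · rw [Finset.mem_singleton] at hy2; subst hy2; exact hy.1
  have hca : c ∈ S → a ∈ S := by
    intro hcS
    obtain ⟨y, hy⟩ := h _ m5
    rw [Finset.mem_inter] at hy
    rcases Finset.mem_insert.1 hy.2 with rfl | hy2
    · exact absurd hy.1 (hS.2 c hcS)
    · rw [Finset.mem_singleton] at hy2; subst hy2; exact hy.1
  have hall : a ∈ S ∧ b ∈ S ∧ c ∈ S := by
    obtain ⟨y, hy⟩ := h _ m1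
    rw [Finset.mem_inter] at hy
    have hy2 := hy.2
    simp only [Finset.mem_insert, Finset.mem_singleton] at hy2
    rcases hy2 with rfl | rfl | rfl
    · exact ⟨hy.1, hab hy.1, hbc (hab hy.1)⟩
    · exact ⟨hca (hbc hy.1), hy.1, hbc hy.1⟩
    · exact ⟨hca hy.1, hab (hca hy.1), hy.1⟩
  obtain ⟨y, hy⟩ := h _ m2
  rw [Finset.mem_inter] at hy
  have hy2 := hy.2
  simp only [Finset.mem_insert, Finset.mem_singleton] at hy2
  rcases hy2 with rfl | rfl | rfl
  · exact hS.2 a hall.1 hy.1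
  · exact hS.2 b hall.2.1 hy.1
  · exact hS.2 c hall.2.2 hy.1

lemma D3c_mem1 (j : ℕ) : ({4*(j:ℤ)+1, 4*(j:ℤ)+2, 4*(j:ℤ)+3} : Finset ℤ) ∈ D3c j := by
  rw [D3c]; exact Finset.mem_insert_self _ _
lemma D3c_mem2 (j : ℕ) : ({-(4*(j:ℤ)+1), -(4*(j:ℤ)+2), -(4*(j:ℤ)+3)} : Finset ℤ) ∈ D3c j := by
  simp only [D3c, Finset.mem_insert, Finset.mem_singleton]; tauto
lemma D3c_mem3 (j : ℕ) : ({-(4*(j:ℤ)+1), 4*(j:ℤ)+2} : Finset ℤ) ∈ D3c j := by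
  simp only [D3c, Finset.mem_insert, Finset.mem_singleton]; tauto
lemma D3c_mem4 (j : ℕ) : ({-(4*(j:ℤ)+2), 4*(j:ℤ)+3} : Finset ℤ) ∈ D3c j := by
  simp only [D3c, Finset.mem_insert, Finset.mem_singleton]; tauto
lemma D3c_mem5 (j : ℕ) : ({-(4*(j:ℤ)+3), 4*(j:ℤ)+1} : Finset ℤ) ∈ D3c j := by
  simp only [D3c, Finset.mem_insert, Finset.mem_singleton]; tauto

lemma D3c_unsat (j : ℕ) : ¬ Sat (D3c j) :=
  triangle_unsat (D3c_mem1 j) (D3c_mem2 j) (D3c_mem3 j) (D3c_mem4 j) (D3c_mem5 j)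

lemma D3c_card (j : ℕ) : (D3c j).card = 5 := by
  have n12 : ({4*(j:ℤ)+1, 4*(j:ℤ)+2, 4*(j:ℤ)+3} : Finset ℤ) ≠ {-(4*(j:ℤ)+1), -(4*(j:ℤ)+2), -(4*(j:ℤ)+3)} :=
    finset_ne (x := 4*(j:ℤ)+1) (by simp) (by simp only [Finset.mem_insert, Finset.mem_singleton]; omega)
  have n13 : ({4*(j:ℤ)+1, 4*(j:ℤ)+2, 4*(j:ℤ)+3} : Finset ℤ) ≠ {-(4*(j:ℤ)+1), 4*(j:ℤ)+2} :=
    finset_ne (x := 4*(j:ℤ)+3) (by simp) (by simp only [Finset.mem_insert, Finset.mem_singleton]; omega)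
  have n14 : ({4*(j:ℤ)+1, 4*(j:ℤ)+2, 4*(j:ℤ)+3} : Finset ℤ) ≠ {-(4*(j:ℤ)+2), 4*(j:ℤ)+3} :=
    finset_ne (x := 4*(j:ℤ)+1) (by simp) (by simp only [Finset.mem_insert, Finset.mem_singleton]; omega)
  have n15 : ({4*(j:ℤ)+1, 4*(j:ℤ)+2, 4*(j:ℤ)+3} : Finset ℤ) ≠ {-(4*(j:ℤ)+3), 4*(j:ℤ)+1} :=
    finset_ne (x := 4*(j:ℤ)+2) (by simp) (by simp only [Finset.mem_insert, Finset.mem_singleton]; omega)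
  have n23 : ({-(4*(j:ℤ)+1), -(4*(j:ℤ)+2), -(4*(j:ℤ)+3)} : Finset ℤ) ≠ {-(4*(j:ℤ)+1), 4*(j:ℤ)+2} :=
    finset_ne (x := -(4*(j:ℤ)+2)) (by simp) (by simp only [Finset.mem_insert, Finset.mem_singleton]; omega)
  have n24 : ({-(4*(j:ℤ)+1), -(4*(j:ℤ)+2), -(4*(j:ℤ)+3)} : Finset ℤ) ≠ {-(4*(j:ℤ)+2), 4*(j:ℤ)+3} :=
    finset_ne (x := -(4*(j:ℤ)+1)) (by simp) (by simp only [Finset.mem_insert, Finset.mem_singleton]; omega)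
  have n25 : ({-(4*(j:ℤ)+1), -(4*(j:ℤ)+2), -(4*(j:ℤ)+3)} : Finset ℤ) ≠ {-(4*(j:ℤ)+3), 4*(j:ℤ)+1} :=
    finset_ne (x := -(4*(j:ℤ)+2)) (by simp) (by simp only [Finset.mem_insert, Finset.mem_singleton]; omega)
  have n34 : ({-(4*(j:ℤ)+1), 4*(j:ℤ)+2} : Finset ℤ) ≠ {-(4*(j:ℤ)+2), 4*(j:ℤ)+3} :=
    finset_ne (x := -(4*(j:ℤ)+1)) (by simp) (by simp only [Finset.mem_insert, Finset.mem_singleton]; omega)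
  have n35 : ({-(4*(j:ℤ)+1), 4*(j:ℤ)+2} : Finset ℤ) ≠ {-(4*(j:ℤ)+3), 4*(j:ℤ)+1} :=
    finset_ne (x := 4*(j:ℤ)+2) (by simp) (by simp only [Finset.mem_insert, Finset.mem_singleton]; omega)
  have n45 : ({-(4*(j:ℤ)+2), 4*(j:ℤ)+3} : Finset ℤ) ≠ {-(4*(j:ℤ)+3), 4*(j:ℤ)+1} :=
    finset_ne (x := -(4*(j:ℤ)+2)) (by simp) (by simp only [Finset.mem_insert, Finset.mem_singleton]; omega)
  rw [D3c]
  rw [Finset.card_insert_of_notMem (by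
      simp only [Finset.mem_insert, Finset.mem_singleton, not_or]
      exact ⟨n12, n13, n14, n15⟩)]
  rw [Finset.card_insert_of_notMem (by
      simp only [Finset.mem_insert, Finset.mem_singleton, not_or]
      exact ⟨n23, n24, n25⟩)]
  rw [Finset.card_insert_of_notMem (by
      simp only [Finset.mem_insert, Finset.mem_singleton, not_or]
      exact ⟨n34, n35⟩)]
  rw [Finset.card_insert_of_notMem (by
      simp only [Finset.mem_singleton]
      exact n45)]
  rfl

end Base
section BaseVar

set_option maxHeartbeats 2000000 in
lemma D3c_cvar (j : ℕ) : cvar (D3c j) = {4*(j:ℤ)+1, 4*(j:ℤ)+2, 4*(j:ℤ)+3} := by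
  have e1 : |(4*(j:ℤ)+1)| = 4*(j:ℤ)+1 := abs_of_nonneg (by positivity)
  have e2 : |(4*(j:ℤ)+2)| = 4*(j:ℤ)+2 := abs_of_nonneg (by positivity)
  have e3 : |(4*(j:ℤ)+3)| = 4*(j:ℤ)+3 := abs_of_nonneg (by positivity)
  have f1 : |(-(4*(j:ℤ)+1))| = 4*(j:ℤ)+1 := by rw [abs_neg]; exact e1
  have f2 : |(-(4*(j:ℤ)+2))| = 4*(j:ℤ)+2 := by rw [abs_neg]; exact e2
  have f3 : |(-(4*(j:ℤ)+3))| = 4*(j:ℤ)+3 := by rw [abs_neg]; exact e3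
  ext w
  simp only [Finset.mem_insert, Finset.mem_singleton]
  constructor
  · intro hw
    obtain ⟨C, hC, x, hx, rfl⟩ := mem_cvar_iff.1 hw
    clear hw
    have hx6 : x = 4*(j:ℤ)+1 ∨ x = 4*(j:ℤ)+2 ∨ x = 4*(j:ℤ)+3 ∨
        x = -(4*(j:ℤ)+1) ∨ x = -(4*(j:ℤ)+2) ∨ x = -(4*(j:ℤ)+3) := by
      simp only [D3c, Finset.mem_insert, Finset.mem_singleton] at hC
      rcases hC with rfl | rfl | rfl | rfl | rfl <;>
        simp only [Finset.mem_insert, Finset.mem_singleton] at hx <;> omega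
    clear hx hC
    rcases hx6 with rfl | rfl | rfl | rfl | rfl | rfl
    · exact Or.inl e1
    · exact Or.inr (Or.inl e2)
    · exact Or.inr (Or.inr e3)
    · exact Or.inl f1
    · exact Or.inr (Or.inl f2)
    · exact Or.inr (Or.inr f3)
  · rintro (rfl | rfl | rfl)
    · exact mem_cvar_iff.2 ⟨_, D3c_mem1 j, _, Finset.mem_insert_self _ _, e1⟩
    · exact mem_cvar_iff.2 ⟨_, D3c_mem3 j, 4*(j:ℤ)+2,
        Finset.mem_insert_of_mem (Finset.mem_singleton_self _), e2⟩
    · exact mem_cvar_iff.2 ⟨_, D3c_mem4 j, 4*(j:ℤ)+3,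
        Finset.mem_insert_of_mem (Finset.mem_singleton_self _), e3⟩

set_option maxHeartbeats 2000000 in
lemma D3c_deg2 (j : ℕ) : Deg2 (D3c j) := by
  intro x hx
  rw [D3c_cvar] at hx
  simp only [Finset.mem_insert, Finset.mem_singleton] at hx
  have hx' : x = 4*(j:ℤ)+1 ∨ x = -(4*(j:ℤ)+1) ∨ x = 4*(j:ℤ)+2 ∨ x = -(4*(j:ℤ)+2) ∨
      x = 4*(j:ℤ)+3 ∨ x = -(4*(j:ℤ)+3) := by
    rcases hx with h | h | h
    · rcases (abs_eq (by positivity)).1 h with rfl | rfl <;> tauto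
    · rcases (abs_eq (by positivity)).1 h with rfl | rfl <;> tauto
    · rcases (abs_eq (by positivity)).1 h with rfl | rfl <;> tauto
  have n1 : ({4*(j:ℤ)+1, 4*(j:ℤ)+2, 4*(j:ℤ)+3} : Finset ℤ) ≠ {-(4*(j:ℤ)+3), 4*(j:ℤ)+1} :=
    finset_ne (x := 4*(j:ℤ)+2) (by simp) (by simp only [Finset.mem_insert, Finset.mem_singleton]; omega)
  have n2 : ({-(4*(j:ℤ)+1), -(4*(j:ℤ)+2), -(4*(j:ℤ)+3)} : Finset ℤ) ≠ {-(4*(j:ℤ)+1), 4*(j:ℤ)+2} :=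
    finset_ne (x := -(4*(j:ℤ)+2)) (by simp) (by simp only [Finset.mem_insert, Finset.mem_singleton]; omega)
  have n3 : ({4*(j:ℤ)+1, 4*(j:ℤ)+2, 4*(j:ℤ)+3} : Finset ℤ) ≠ {-(4*(j:ℤ)+1), 4*(j:ℤ)+2} :=
    finset_ne (x := 4*(j:ℤ)+3) (by simp) (by simp only [Finset.mem_insert, Finset.mem_singleton]; omega)
  have n4 : ({-(4*(j:ℤ)+1), -(4*(j:ℤ)+2), -(4*(j:ℤ)+3)} : Finset ℤ) ≠ {-(4*(j:ℤ)+2), 4*(j:ℤ)+3} :=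
    finset_ne (x := -(4*(j:ℤ)+1)) (by simp) (by simp only [Finset.mem_insert, Finset.mem_singleton]; omega)
  have n5 : ({4*(j:ℤ)+1, 4*(j:ℤ)+2, 4*(j:ℤ)+3} : Finset ℤ) ≠ {-(4*(j:ℤ)+2), 4*(j:ℤ)+3} :=
    finset_ne (x := 4*(j:ℤ)+1) (by simp) (by simp only [Finset.mem_insert, Finset.mem_singleton]; omega)
  have n6 : ({-(4*(j:ℤ)+1), -(4*(j:ℤ)+2), -(4*(j:ℤ)+3)} : Finset ℤ) ≠ {-(4*(j:ℤ)+3), 4*(j:ℤ)+1} :=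
    finset_ne (x := -(4*(j:ℤ)+2)) (by simp) (by simp only [Finset.mem_insert, Finset.mem_singleton]; omega)
  rcases hx' with rfl | rfl | rfl | rfl | rfl | rfl
  · exact ⟨_, D3c_mem1 j, _, D3c_mem5 j, n1, by simp, by simp⟩
  · exact ⟨_, D3c_mem2 j, _, D3c_mem3 j, n2, by simp, by simp⟩
  · exact ⟨_, D3c_mem1 j, _, D3c_mem3 j, n3, by simp, by simp⟩
  · exact ⟨_, D3c_mem2 j, _, D3c_mem4 j, n4, by simp, by simp⟩
  · exact ⟨_, D3c_mem1 j, _, D3c_mem4 j, n5, by simp, by simp⟩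
  · exact ⟨_, D3c_mem2 j, _, D3c_mem5 j, n6, by simp, by simp⟩

end BaseVar
section Family

/-- The chained family: `m+1` copies of D3 linked by `m` fresh variables. -/
def Fm : ℕ → Cls
  | 0 => D3c 0
  | m+1 => comb (Fm m) (D3c (m+1)) (4*(m:ℤ)+4)

lemma Fm_spec (m : ℕ) : IsClauseSet (Fm m) ∧ Hitting (Fm m) ∧ ¬ Sat (Fm m) ∧ Deg2 (Fm m) ∧
    (Fm m).card = 5*m+5 ∧ cvar (Fm m) = Finset.Icc (1:ℤ) (4*m+3) := by
  induction m with
  | zero =>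
    refine ⟨D3c_clauseSet 0, D3c_hitting 0, D3c_unsat 0, D3c_deg2 0, D3c_card 0, ?_⟩
    show cvar (D3c 0) = _
    rw [D3c_cvar 0]
    ext w
    simp only [Finset.mem_insert, Finset.mem_singleton, Finset.mem_Icc]
    push_cast
    omega
  | succ m ih =>
    obtain ⟨hcs, hhit, huns, hdeg, hcard, hcv⟩ := ih
    set v : ℤ := 4*(m:ℤ)+4 with hvdef
    have hv : 0 < v := by positivity
    have hvF : v ∉ cvar (Fm m) := by
      rw [hcv]; simp only [Finset.mem_Icc]; omega
    have hvG : v ∉ cvar (D3c (m+1)) := by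
      rw [D3c_cvar]
      simp only [Finset.mem_insert, Finset.mem_singleton]
      push_cast
      omega
    have hFne : (Fm m).Nonempty := Finset.card_pos.1 (by omega)
    have hGne : (D3c (m+1)).Nonempty := Finset.card_pos.1 (by rw [D3c_card]; omega)
    have hF2 : 2 ≤ (Fm m).card := by omega
    have hG2 : 2 ≤ (D3c (m+1)).card := by rw [D3c_card]; omega
    refine ⟨comb_clauseSet hv hvF hvG hcs (D3c_clauseSet _),
      comb_hitting hv hvF hvG hhit (D3c_hitting _),
      comb_unsat huns (D3c_unsat _),
      comb_deg2 hv hvF hvG hF2 hG2 hdeg (D3c_deg2 _) hFne hGne, ?_, ?_⟩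
    · show (comb (Fm m) (D3c (m+1)) v).card = _
      rw [comb_card hv hvF hvG, hcard, D3c_card]
      omega
    · show cvar (comb (Fm m) (D3c (m+1)) v) = _
      rw [comb_cvar hv hFne hGne, hcv, D3c_cvar]
      ext w
      simp only [Finset.mem_insert, Finset.mem_union, Finset.mem_Icc, Finset.mem_singleton]
      push_cast
      omega

end Family
/-- For every `k ≥ 2` there is a nonsingular UHIT of deficiency `k`
with exactly `4k - 5` variables. -/
theorem stmt4 (k : ℤ) (hk : 2 ≤ k) :
    ∃ F : Cls, UHit F ∧ Nonsingular F ∧ deficiency F = k ∧ (nvar F : ℤ) = 4 * k - 5 := by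
  set m : ℕ := (k - 2).toNat with hmdef
  have hm : (m : ℤ) = k - 2 := Int.toNat_of_nonneg (by omega)
  obtain ⟨hcs, hhit, huns, hdeg, hcard, hcv⟩ := Fm_spec m
  refine ⟨Fm m, ⟨hcs, hhit, huns⟩, nonsingular_of_deg2 hcs hdeg, ?_, ?_⟩
  · have hn : (nvar (Fm m) : ℤ) = 4*m+3 := by
      rw [nvar, hcv, Int.card_Icc]
      rw [Int.toNat_of_nonneg (by omega)]
      ring
    rw [deficiency, hn, hcard]
    push_cast
    omega
  · have hn : (nvar (Fm m) : ℤ) = 4*m+3 := by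
      rw [nvar, hcv, Int.card_Icc]
      rw [Int.toNat_of_nonneg (by omega)]
      ring
    omega
end
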